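/- Let K be a number field with finite extensions L and F such that L/K is tame abelian with Galois group G, and suppose L and F are arithmetically disjoint over K (i.e., O_{LF} = O_L ⊗_{O_K} O_F). If O_L is free over O_K[G], then O_{LF} is free over O_F[G], where Gal(LF/F) is identified with G. -/

import Mathlib

/-!
Restriction identifies `Gal(E/F)` with `Gal(L/K)`: it is injective because `E` is generated over
`F` by `L`, and both groups have order `[E:F] = [L:K]`. If the conjugates of `α` form a normal
integral basis of `L/K`, they span `𝓞 L` over `𝓞 K`, hence, by arithmetic disjointness, their images
span `𝓞 E` over `𝓞 F` and therefore `E` over `F`. Being `[E:F]` many, they are an `F`-basis of `E`,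
and reindexing by `Gal(E/F)` shows that `α` generates a normal integral basis of `E/F`.
-/

open NumberField

def IsTameExt (K L : Type*) [Field K] [Field L] [NumberField K] [NumberField L]
    [Algebra K L] : Prop :=
  ∀ P : Ideal (𝓞 L), P.IsMaximal →
    ¬ (ringChar ((𝓞 L) ⧸ P) ∣
        Ideal.ramificationIdx'
          (P.comap (algebraMap (𝓞 K) (𝓞 L))) P)

/-- Normal integral basis. -/
def HasNIB (K L : Type*) [Field K] [Field L] [NumberField K] [NumberField L]
    [Algebra K L] [FiniteDimensional K L] : Prop :=
  ∃ α : 𝓞 L, ∀ x : 𝓞 L, ∃! c : (L ≃ₐ[K] L) → 𝓞 K,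
    (x : L) = ∑ g : L ≃ₐ[K] L, algebraMap K L (c g : K) * g (α : L)

section Compositum

open IntermediateField

variable {K L F E : Type*} [Field K] [Field L] [Field F] [Field E]
  [Algebra K F] [Algebra K E] [Algebra L E] [Algebra F E] [IsScalarTower K F E]

theorem adjoin_range_algebraMap_eq_top_of_compositum
    (h : adjoin K (Set.range (algebraMap L E) ∪ Set.range (algebraMap F E)) = ⊤) :
    adjoin F (Set.range (algebraMap L E)) = ⊤ := by
  rw [← restrictScalars_eq_top_iff (K := K), eq_top_iff, ← h, adjoin_le_iff]
  rintro _ (⟨y, rfl⟩ | ⟨c, rfl⟩)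
  · exact subset_adjoin F _ ⟨y, rfl⟩
  · exact algebraMap_mem _ c

theorem algebra_adjoin_range_algebraMap_eq_top_of_compositum [Algebra.IsAlgebraic F E]
    (h : adjoin K (Set.range (algebraMap L E) ∪ Set.range (algebraMap F E)) = ⊤) :
    Algebra.adjoin F (Set.range (algebraMap L E)) = ⊤ := by
  rw [← adjoin_toSubalgebra_of_isAlgebraic fun x _ ↦ Algebra.IsAlgebraic.isAlgebraic x,
    adjoin_range_algebraMap_eq_top_of_compositum h, top_toSubalgebra]

variable [Algebra K L] [IsScalarTower K L E]

theorem isGalois_of_compositum [FiniteDimensional K L] [IsGalois K L] [Algebra.IsAlgebraic F E]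
    (h : adjoin K (Set.range (algebraMap L E) ∪ Set.range (algebraMap F E)) = ⊤) :
    IsGalois F E := by
  obtain ⟨T, hsep, hT⟩ := IsGalois.is_separable_splitting_field K L
  have : (T.map (algebraMap K F)).IsSplittingField F E := by
    refine ⟨?_, ?_⟩
    · rw [Polynomial.map_map, ← IsScalarTower.algebraMap_eq, IsScalarTower.algebraMap_eq K L E,
      ← Polynomial.map_map]
      exact (hT.splits').map _
    · have hroots : (T.map (algebraMap K F)).rootSet E = T.rootSet E := by
        simp [Set.ext_iff, Polynomial.mem_rootSet']
      rw [hroots, eq_top_iff, ← algebra_adjoin_range_algebraMap_eq_top_of_compositum h,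
        Algebra.adjoin_le_iff]
      rintro _ ⟨y, rfl⟩
      have hy : algebraMap L E y ∈ Algebra.adjoin K (T.rootSet E) := by
        rw [hT.adjoin_rootSet_eq_range L T (IsScalarTower.toAlgHom K L E)]
        exact ⟨y, rfl⟩
      have hle : Algebra.adjoin K (T.rootSet E) ≤
          (Algebra.adjoin F (T.rootSet E)).restrictScalars K :=
        Algebra.adjoin_le Algebra.subset_adjoin
      exact hle hy
  exact IsGalois.of_separable_splitting_field (p := T.map (algebraMap K F)) hsep.map

variable (K L F E) in
noncomputable def restrictCompositumHom [Normal K L] : (E ≃ₐ[F] E) →* (L ≃ₐ[K] L) :=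
  (AlgEquiv.restrictNormalHom L).comp (AlgEquiv.restrictScalarsHom K)

theorem algebraMap_restrictCompositumHom_apply [Normal K L] (g : E ≃ₐ[F] E) (y : L) :
    algebraMap L E (restrictCompositumHom K L F E g y) = g (algebraMap L E y) :=
  AlgEquiv.restrictNormal_commutes _ L y

theorem restrictCompositumHom_injective [Normal K L] [Algebra.IsAlgebraic F E]
    (h : adjoin K (Set.range (algebraMap L E) ∪ Set.range (algebraMap F E)) = ⊤) :
    Function.Injective (restrictCompositumHom K L F E) := by
  intro g₁ g₂ hg
  refine AlgEquiv.coe_toAlgHom_injective <|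
    AlgHom.ext_of_adjoin_eq_top (algebra_adjoin_range_algebraMap_eq_top_of_compositum h) ?_
  rintro _ ⟨y, rfl⟩
  show g₁ (algebraMap L E y) = g₂ (algebraMap L E y)
  rw [← algebraMap_restrictCompositumHom_apply (K := K), hg, algebraMap_restrictCompositumHom_apply]

noncomputable def galCompositumEquiv [FiniteDimensional K L] [IsGalois K L]
    [FiniteDimensional F E]
    (h : adjoin K (Set.range (algebraMap L E) ∪ Set.range (algebraMap F E)) = ⊤)
    (hdim : Module.finrank F E = Module.finrank K L) : (E ≃ₐ[F] E) ≃* (L ≃ₐ[K] L) :=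
  have : IsGalois F E := isGalois_of_compositum h
  MulEquiv.ofBijective (restrictCompositumHom K L F E) <|
    (Fintype.bijective_iff_injective_and_card _).mpr
      ⟨restrictCompositumHom_injective (K := K) (L := L) h, by
        rw [← Nat.card_eq_fintype_card, ← Nat.card_eq_fintype_card, IsGalois.card_aut_eq_finrank,
          IsGalois.card_aut_eq_finrank, hdim]⟩

end Compositum

theorem NumberField.submodule_eq_top_of_forall_ringOfIntegers_mem {F E : Type*} [Field F]
    [Field E] [NumberField E] [Algebra F E] (p : Submodule F E) (hp : ∀ x : 𝓞 E, (x : E) ∈ p) :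
    p = ⊤ := by
  refine eq_top_iff.mpr fun z _ ↦ ?_
  obtain ⟨n, hn, hint⟩ := ((IsFractionRing.isAlgebraic_iff ℤ ℚ E).mpr
    (Algebra.IsAlgebraic.isAlgebraic z)).exists_integral_multiple
  have hnF : (n : F) ≠ 0 := fun h0 ↦ hn (by simpa using congr_arg (algebraMap F E) h0)
  have hnz : (n : F) • z ∈ p := by
    rw [Int.cast_smul_eq_zsmul]
    exact hp ⟨n • z, hint⟩
  simpa [smul_smul, inv_mul_cancel₀ hnF] using p.smul_mem (n : F)⁻¹ hnz

theorem NumberField.mem_span_ringOfIntegers_iff {K L ι : Type*} [Field K] [Field L]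
    [Algebra K L] [Fintype ι] {v : ι → L} {x : L} :
    x ∈ Submodule.span (𝓞 K) (Set.range v) ↔
      ∃ c : ι → 𝓞 K, x = ∑ i, algebraMap K L (c i) * v i := by
  simp only [Submodule.mem_span_range_iff_exists_fun, Algebra.smul_def, eq_comm (a := x)]
  rfl

theorem HasNIB.exists_forall_mem_span {K L : Type*} [Field K] [Field L] [NumberField K]
    [NumberField L] [Algebra K L] [FiniteDimensional K L] : HasNIB K L → ∃ α : 𝓞 L, ∀ x : 𝓞 L,
      (x : L) ∈ Submodule.span (𝓞 K) (Set.range fun g : L ≃ₐ[K] L ↦ g (α : L)) :=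
  fun ⟨α, hα⟩ ↦ ⟨α, fun x ↦ NumberField.mem_span_ringOfIntegers_iff.mpr (hα x).exists⟩

theorem hasNIB_of_linearIndependent {K L : Type*} [Field K] [Field L] [NumberField K]
    [NumberField L] [Algebra K L] [FiniteDimensional K L] (α : 𝓞 L)
    (hli : LinearIndependent K fun g : L ≃ₐ[K] L ↦ g (α : L))
    (hspan : ∀ x : 𝓞 L,
      (x : L) ∈ Submodule.span (𝓞 K) (Set.range fun g : L ≃ₐ[K] L ↦ g (α : L))) :
    HasNIB K L := by
  refine ⟨α, fun x ↦ ?_⟩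
  obtain ⟨c, hc⟩ := NumberField.mem_span_ringOfIntegers_iff.mp (hspan x)
  refine ⟨c, hc, fun c' hc' ↦ funext fun g ↦ RingOfIntegers.ext ?_⟩
  simp only [← Algebra.smul_def] at hc hc'
  exact Fintype.linearIndependent_iffₛ.mp hli _ _ (hc'.symm.trans hc) g

section SpanTransfer

variable {K L F E ι : Type*} [Field K] [Field L] [Field F] [Field E] [Algebra K L] [Algebra K F]
  [Algebra K E] [Algebra L E] [Algebra F E] [IsScalarTower K L E] [IsScalarTower K F E]
  {v : ι → L}

theorem NumberField.algebraMap_mem_span_of_mem_span {y : L}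
    (hy : y ∈ Submodule.span (𝓞 K) (Set.range v)) :
    algebraMap L E y ∈ Submodule.span (𝓞 F) (Set.range (algebraMap L E ∘ v)) := by
  induction hy using Submodule.span_induction with
  | mem _ hx => obtain ⟨i, rfl⟩ := hx; exact Submodule.subset_span ⟨i, rfl⟩
  | zero => simp
  | add _ _ _ _ hx hy => rw [map_add]; exact add_mem hx hy
  | smul c x _ hx =>
    have hc : algebraMap L E (c • x) = algebraMap (𝓞 K) (𝓞 F) c • algebraMap L E x := by
      rw [Algebra.smul_def, Algebra.smul_def, map_mul, IsScalarTower.algebraMap_apply (𝓞 F) F E,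
        IsScalarTower.algebraMap_apply (𝓞 K) K L, ← IsScalarTower.algebraMap_apply K L E,
        IsScalarTower.algebraMap_apply K F E]
      rfl
    rw [hc]
    exact Submodule.smul_mem _ _ hx

theorem NumberField.ringOfIntegers_mem_span_comp_of_mem_span
    (hv : ∀ y : 𝓞 L, (y : L) ∈ Submodule.span (𝓞 K) (Set.range v))
    (hdisj : ∀ x : 𝓞 E, x ∈ Submodule.span (𝓞 F) (Set.range (algebraMap (𝓞 L) (𝓞 E))))
    (x : 𝓞 E) : (x : E) ∈ Submodule.span (𝓞 F) (Set.range (algebraMap L E ∘ v)) := by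
  have hx := Submodule.mem_map_of_mem
    (f := (IsScalarTower.toAlgHom (𝓞 F) (𝓞 E) E).toLinearMap) (hdisj x)
  rw [Submodule.map_span, ← Set.range_comp] at hx
  refine Submodule.span_le.mpr (Set.range_subset_iff.mpr fun y ↦ ?_) hx
  exact algebraMap_mem_span_of_mem_span (hv y)

end SpanTransfer

theorem stmt_2_general (K L F E : Type*) [Field K] [Field L] [Field F] [Field E]
    [NumberField K] [NumberField L] [NumberField F] [NumberField E]
    [Algebra K L] [Algebra K F] [Algebra K E] [Algebra L E] [Algebra F E]
    [IsScalarTower K L E] [IsScalarTower K F E]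
    [FiniteDimensional K L] [FiniteDimensional F E]
    [IsGalois K L]
    -- E = L·F :
    (hcomp : IntermediateField.adjoin K
        (Set.range (algebraMap L E) ∪ Set.range (algebraMap F E)) = ⊤)
    -- linear disjointness :
    (hdim : Module.finrank F E = Module.finrank K L)
    -- O_E = O_L ⊗_{O_K} O_F :
    (hdisj : ∀ x : 𝓞 E, x ∈ Submodule.span (𝓞 F)
        (Set.range (algebraMap (𝓞 L) (𝓞 E))))
    (hNIB : HasNIB K L) :
    HasNIB F E := by
  obtain ⟨α, hα⟩ := hNIB.exists_forall_mem_span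
  let σ := galCompositumEquiv hcomp hdim
  let b : (L ≃ₐ[K] L) → E := algebraMap L E ∘ fun g ↦ g (α : L)
  have hb : (fun g : E ≃ₐ[F] E ↦ g (algebraMap (𝓞 L) (𝓞 E) α : E)) = b ∘ σ :=
    funext fun g ↦ (algebraMap_restrictCompositumHom_apply g (α : L)).symm
  have hint : ∀ x : 𝓞 E, (x : E) ∈ Submodule.span (𝓞 F) (Set.range b) :=
    NumberField.ringOfIntegers_mem_span_comp_of_mem_span hα hdisj
  have hspan : Submodule.span F (Set.range b) = ⊤ :=
    NumberField.submodule_eq_top_of_forall_ringOfIntegers_mem _ fun x ↦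
      Submodule.span_le_restrictScalars (𝓞 F) F _ (hint x)
  have hli : LinearIndependent F b := linearIndependent_of_top_le_span_of_card_eq_finrank
    hspan.ge (by rw [← Nat.card_eq_fintype_card, IsGalois.card_aut_eq_finrank, hdim])
  refine hasNIB_of_linearIndependent _ (hb ▸ hli.comp σ σ.injective) fun x ↦ ?_
  rw [hb, Set.range_comp, σ.surjective.range_eq, Set.image_univ]
  exact hint x

/-- if L/K is tame abelian, F/K is a further extension, E = LF is
the compositum, and L and F are arithmetically disjoint over K
(O_E = O_L ⊗_{O_K} O_F, expressed as: E is the compositum, [E:F] = [L:K] and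
O_E is spanned over O_F by the image of O_L), then a normal integral basis for
L/K gives one for E/F. -/
theorem stmt_2 (K L F E : Type*) [Field K] [Field L] [Field F] [Field E]
    [NumberField K] [NumberField L] [NumberField F] [NumberField E]
    [Algebra K L] [Algebra K F] [Algebra K E] [Algebra L E] [Algebra F E]
    [IsScalarTower K L E] [IsScalarTower K F E]
    [FiniteDimensional K L] [FiniteDimensional F E] [FiniteDimensional K E]
    [IsGalois K L]
    (habel : ∀ σ τ : L ≃ₐ[K] L, σ * τ = τ * σ)
    (htame : IsTameExt K L)
    -- E = L·F :
    (hcomp : IntermediateField.adjoin K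
        (Set.range (algebraMap L E) ∪ Set.range (algebraMap F E)) = ⊤)
    -- linear disjointness :
    (hdim : Module.finrank F E = Module.finrank K L)
    -- O_E = O_L ⊗_{O_K} O_F :
    (hdisj : ∀ x : 𝓞 E, x ∈ Submodule.span (𝓞 F)
        (Set.range (algebraMap (𝓞 L) (𝓞 E))))
    (hNIB : HasNIB K L) :
    HasNIB F E :=
  stmt_2_general K L F E hcomp hdim hdisj hNIB
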